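/- arXiv:2103.11725 — 6 statements merged into one kernel-verified Lean document; each statement's English description precedes it below -/
import Mathlib

section
/- Let n ≥ 1 and let F be a field with char(F) ≠ 2 and |F| ≥ n² + 1. If a, b ∈ Σ_n satisfy det(a + x) = det(b + x) for all x ∈ Σ_n, then a = b. -/
open Matrix

/-- The `F`-submodule of symmetric `n × n` matrices over `F` (the space `Σ_n`). -/
def symmSubmodule (F : Type*) [Field F] (n : ℕ) :
    Submodule F (Matrix (Fin n) (Fin n) F) where
  carrier := {a | aᵀ = a}
  add_mem' := by
    intro a b ha hb
    simp only [Set.mem_setOf_eq] at *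
    rw [Matrix.transpose_add, ha, hb]
  zero_mem' := Matrix.transpose_zero
  smul_mem' := by
    intro c a ha
    simp only [Set.mem_setOf_eq] at *
    rw [Matrix.transpose_smul, ha]

/-
With `c = a - b`, the hypothesis says `det (c + y) = det y` for all symmetric `y`, and this
property passes to every congruent matrix `Pᵀ c P`. Diagonalising `c` by congruence (possible
as `2` is invertible) to `diag d`, the diagonal test matrix with entries `1 - dᵢ` for `i ≠ k`
and `0` at `k` gives `d_k = det (diag d + y) = det y = 0`.
-/

theorem eq_zero_of_forall_prod_add_eq_prod {ι R : Type*} [Fintype ι] [DecidableEq ι]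
    [CommRing R] {d : ι → R} (h : ∀ w : ι → R, ∏ i, (d i + w i) = ∏ i, w i) : d = 0 := by
  funext k
  set w := Function.update (1 - d) k 0
  have hw : ∏ i, w i = 0 := Finset.prod_eq_zero (Finset.mem_univ k) (by simp [w])
  have hdw : ∏ i, (d i + w i) = d k := by
    refine (Finset.prod_eq_single k (fun i _ hik => ?_) (by simp)).trans (by simp [w])
    simp [w, hik]
  simpa [hw, hdw] using h w

namespace Matrix

variable {n R K : Type*} [Fintype n] [DecidableEq n]

theorem det_transpose_mul_mul [CommRing R] (P M : Matrix n n R) :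
    (Pᵀ * M * P).det = P.det ^ 2 * M.det := by
  rw [det_mul, det_mul, det_transpose]
  ring

theorem transpose_mul_transpose_mul_mul_mul_of_mul_eq_one [CommRing R] {P Q : Matrix n n R}
    (h : Q * P = 1) (M : Matrix n n R) : Pᵀ * (Qᵀ * M * Q) * P = M := by
  calc Pᵀ * (Qᵀ * M * Q) * P = (Q * P)ᵀ * M * (Q * P) := by
        simp only [transpose_mul, Matrix.mul_assoc]
    _ = M := by simp [h]

theorem IsSymm.exists_isUnit_det_transpose_mul_mul_eq_diagonal [Field K] [Invertible (2 : K)]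
    {M : Matrix n n K} (hM : M.IsSymm) :
    ∃ P : Matrix n n K, IsUnit P.det ∧ ∃ d : n → K, Pᵀ * M * P = diagonal d := by
  set b := Pi.basisFun K n
  set B := M.toBilin b
  obtain ⟨v, hv⟩ := LinearMap.BilinForm.exists_orthogonal_basis
    (LinearMap.BilinForm.isSymm_iff.mp ((isSymm_toBilin_iff_isSymm b).mpr hM))
  let c : Module.Basis n K (n → K) := v.reindex (Fintype.equivOfCardEq (by simp))
  have hc : B.IsOrthoᵢ c := by
    rw [Module.Basis.coe_reindex]
    exact hv.comp_of_injective (Equiv.injective _)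
  have : Invertible (b.toMatrix c) := b.invertibleToMatrix c
  refine ⟨b.toMatrix c, isUnit_det_of_invertible _, fun i => B (c i) (c i), ?_⟩
  rw [← LinearMap.BilinForm.toMatrix_toBilin b M, LinearMap.BilinForm.toMatrix_mul_basis_toMatrix]
  ext i j
  rw [LinearMap.BilinForm.toMatrix_apply]
  rcases eq_or_ne i j with rfl | hij
  · rw [diagonal_apply_eq]
  · rw [diagonal_apply_ne _ hij]
    exact hc hij

theorem IsSymm.eq_zero_of_forall_det_add_eq [Field K] [Invertible (2 : K)]
    {C : Matrix n n K} (hC : C.IsSymm) (h : ∀ Y : Matrix n n K, Y.IsSymm → (C + Y).det = Y.det) :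
    C = 0 := by
  obtain ⟨P, hP, d, hd⟩ := hC.exists_isUnit_det_transpose_mul_mul_eq_diagonal
  have hd0 : d = 0 := by
    refine eq_zero_of_forall_prod_add_eq_prod fun w => ?_
    set Y := (P⁻¹)ᵀ * diagonal w * P⁻¹
    have hY : Y.IsSymm := by
      simp only [Y, IsSymm, transpose_mul, transpose_transpose, diagonal_transpose,
        Matrix.mul_assoc]
    have hPY : Pᵀ * Y * P = diagonal w :=
      transpose_mul_transpose_mul_mul_mul_of_mul_eq_one (nonsing_inv_mul P hP) _
    calc ∏ i, (d i + w i) = (Pᵀ * (C + Y) * P).det := by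
          rw [Matrix.mul_add, Matrix.add_mul, hd, hPY, diagonal_add, det_diagonal]
      _ = P.det ^ 2 * Y.det := by rw [det_transpose_mul_mul, h Y hY]
      _ = ∏ i, w i := by rw [← det_transpose_mul_mul, hPY, det_diagonal]
  rw [← transpose_mul_transpose_mul_mul_mul_of_mul_eq_one (mul_nonsing_inv P hP) C, hd, hd0]
  simp

end Matrix

theorem symm_det_add_cancel_general
    {F : Type*} [Field F] {n : ℕ}
    (hchar : ringChar F ≠ 2)
    (a b : symmSubmodule F n)
    (h : ∀ x : symmSubmodule F n,
      ((a : Matrix (Fin n) (Fin n) F) + (x : Matrix (Fin n) (Fin n) F)).det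
        = ((b : Matrix (Fin n) (Fin n) F) + (x : Matrix (Fin n) (Fin n) F)).det) :
    a = b := by
  have : Invertible (2 : F) := invertibleOfNonzero (Ring.two_ne_zero hchar)
  have ha : (a : Matrix (Fin n) (Fin n) F).IsSymm := a.2
  have hb : (b : Matrix (Fin n) (Fin n) F).IsSymm := b.2
  have hab : (a - b : Matrix (Fin n) (Fin n) F).IsSymm := ha.sub hb
  refine Subtype.ext (sub_eq_zero.mp (hab.eq_zero_of_forall_det_add_eq fun y hy => ?_))
  have hyb : y - b ∈ symmSubmodule F n := hy.sub hb
  simpa only [← add_sub_assoc, sub_add_eq_add_sub, add_sub_cancel_left] using h ⟨y - b, hyb⟩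

/-- **Lemma 1.** If symmetric matrices `a, b` satisfy `det (a + x) = det (b + x)` for all
symmetric `x`, then `a = b`. -/
theorem symm_det_add_cancel
    {F : Type*} [Field F] {n : ℕ} (hn : 1 ≤ n)
    (hchar : ringChar F ≠ 2) (hcard : (n ^ 2 + 1 : Cardinal) ≤ Cardinal.mk F)
    (a b : symmSubmodule F n)
    (h : ∀ x : symmSubmodule F n,
      ((a : Matrix (Fin n) (Fin n) F) + (x : Matrix (Fin n) (Fin n) F)).det
        = ((b : Matrix (Fin n) (Fin n) F) + (x : Matrix (Fin n) (Fin n) F)).det) :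
    a = b :=
  symm_det_add_cancel_general hchar a b h
end

section
/- Let n ≥ 1 and let F be a field with char(F) ≠ 2 and |F| ≥ n² + 1. Let ψ : Σ_n → Σ_n be a map and let χ be a map from the set of all invertible matrices in Σ_n into Σ_n. If tr(x·y) = tr(χ(x)·ψ(y)) for every invertible x ∈ Σ_n and every y ∈ Σ_n, then ψ is F-linear. -/
set_option synthInstance.maxHeartbeats 1000000
set_option maxHeartbeats 1000000


open Matrix

lemma mem_symmSubmodule {F : Type*} [Field F] {n : ℕ} {a : Matrix (Fin n) (Fin n) F} :
    a ∈ symmSubmodule F n ↔ aᵀ = a := Iff.rfl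

/-- If a symmetric matrix pairs to zero (under the trace form) with every invertible
symmetric matrix, it is zero. -/
lemma symm_trace_eq_zero {F : Type*} [Field F] {n : ℕ} (hchar : ringChar F ≠ 2)
    (e : Matrix (Fin n) (Fin n) F) (he : eᵀ = e)
    (H : ∀ x : Matrix (Fin n) (Fin n) F, xᵀ = x → IsUnit x → Matrix.trace (x * e) = 0) :
    e = 0 := by
  have h2 : (2 : F) ≠ 0 := Ring.two_ne_zero hchar
  have htr : Matrix.trace e = 0 := by
    have := H 1 Matrix.transpose_one isUnit_one
    simpa using this
  have hsym : ∀ a b, e a b = e b a := fun a b => congrFun (congrFun he b) a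
  have hdiag : ∀ i, e i i = 0 := by
    intro i
    have hx := H (Matrix.diagonal (fun j => if j = i then (2:F) else 1))
      (Matrix.diagonal_transpose _)
      (by
        rw [Matrix.isUnit_iff_isUnit_det, Matrix.det_diagonal]
        refine (Finset.prod_ne_zero_iff.2 fun j _ => ?_).isUnit
        split
        · exact h2
        · exact one_ne_zero)
    have hterm : ∀ j, Matrix.diag ((Matrix.diagonal (fun j => if j = i then (2:F) else 1)) * e) j
        = e j j + (if j = i then e j j else 0) := by
      intro j
      rw [Matrix.diag_apply, Matrix.diagonal_mul]
      split <;> ring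
    rw [Matrix.trace] at hx
    rw [Finset.sum_congr rfl (fun j _ => hterm j), Finset.sum_add_distrib,
      Finset.sum_ite_eq' Finset.univ i (fun j => e j j)] at hx
    have htr' : ∑ j, e j j = 0 := by simpa [Matrix.trace, Matrix.diag] using htr
    simpa [htr'] using hx
  ext a b
  rcases eq_or_ne a b with rfl | hab
  · simpa using hdiag a
  · have hsymm : ((Equiv.swap a b).permMatrix F)ᵀ = (Equiv.swap a b).permMatrix F := by
      rw [← PEquiv.toMatrix_symm, ← Equiv.toPEquiv_symm, Equiv.symm_swap]
    have hunit : IsUnit ((Equiv.swap a b).permMatrix F) := by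
      rw [Matrix.isUnit_iff_isUnit_det, Matrix.det_permutation]
      rcases Int.units_eq_one_or (Equiv.Perm.sign (Equiv.swap a b)) with h | h <;>
        rw [h] <;> simp
    have hx := H _ hsymm hunit
    rw [PEquiv.toMatrix_toPEquiv_mul] at hx
    have hsum : ∑ j, e (Equiv.swap a b j) j = ∑ j ∈ ({a, b} : Finset (Fin n)),
        e (Equiv.swap a b j) j := by
      refine (Finset.sum_subset (Finset.subset_univ _) ?_).symm
      intro j _ hj
      simp only [Finset.mem_insert, Finset.mem_singleton, not_or] at hj
      rw [Equiv.swap_apply_of_ne_of_ne hj.1 hj.2]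
      exact hdiag j
    have hx' : (2 : F) * e a b = 0 := by
      have : Matrix.trace (e.submatrix (Equiv.swap a b) id) = ∑ j, e (Equiv.swap a b j) j := by
        simp [Matrix.trace, Matrix.diag]
      rw [this, hsum, Finset.sum_pair hab, Equiv.swap_apply_left, Equiv.swap_apply_right,
        hsym b a] at hx
      rw [two_mul]
      exact hx
    have := mul_eq_zero.mp hx'
    simpa [h2] using this

open Module in
/-- If the "flipped graph" of `ψ` spans a subspace meeting `{0} × V` trivially, then `ψ`
is linear. -/
lemma isLinearMap_of_graph {K V : Type*} [Field K] [AddCommGroup V] [Module K V]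
    [FiniteDimensional K V] (ψ : V → V)
    (hgraph : ∀ p ∈ Submodule.span K (Set.range fun y : V => ((ψ y, y) : V × V)),
      p.1 = 0 → p = 0) :
    IsLinearMap K ψ := by
  classical
  set W : Submodule K (V × V) := Submodule.span K (Set.range fun y : V => ((ψ y, y) : V × V))
    with hWdef
  let π₁ : W →ₗ[K] V := (LinearMap.fst K V V).domRestrict W
  let π₂ : W →ₗ[K] V := (LinearMap.snd K V V).domRestrict W
  have hker : ∀ p : W, π₁ p = 0 → p = 0 := fun p hp =>
    Subtype.ext (hgraph p.1 p.2 hp)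
  have hπ₁inj : Function.Injective π₁ := by
    rw [← LinearMap.ker_eq_bot]
    refine (Submodule.eq_bot_iff _).mpr ?_
    intro p hp
    exact hker p (LinearMap.mem_ker.mp hp)
  have hπ₂surj : Function.Surjective π₂ := fun y =>
    ⟨⟨(ψ y, y), Submodule.subset_span ⟨y, rfl⟩⟩, rfl⟩
  have h1 : finrank K W ≤ finrank K V := LinearMap.finrank_le_finrank_of_injective hπ₁inj
  have h2 : finrank K V ≤ finrank K W := by
    have hr := LinearMap.finrank_range_add_finrank_ker π₂
    rw [LinearMap.range_eq_top.mpr hπ₂surj, finrank_top] at hr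
    exact hr ▸ Nat.le_add_right _ _
  have hfr : finrank K W = finrank K V := le_antisymm h1 h2
  have hπ₂inj : Function.Injective π₂ :=
    (LinearMap.injective_iff_surjective_of_finrank_eq_finrank hfr).mpr hπ₂surj
  let E : W ≃ₗ[K] V := LinearEquiv.ofBijective π₂ ⟨hπ₂inj, hπ₂surj⟩
  let f : V →ₗ[K] V := π₁ ∘ₗ (E.symm : V →ₗ[K] W)
  have hψ : ∀ y, ψ y = f y := by
    intro y
    have hmem : ((ψ y, y) : V × V) ∈ W := Submodule.subset_span ⟨y, rfl⟩
    have hE : E ⟨(ψ y, y), hmem⟩ = y := rfl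
    have hEs : E.symm y = ⟨(ψ y, y), hmem⟩ :=
      (LinearEquiv.symm_apply_eq E).mpr hE.symm
    show ψ y = π₁ (E.symm y)
    rw [hEs]
    rfl
  constructor
  · intro a b; rw [hψ, hψ, hψ, map_add]
  · intro c a; rw [hψ, hψ, _root_.map_smul]

/-- **Lemma 2.** Let `ψ : Σ_n → Σ_n` and let `χ` be a map defined on the set of invertible
symmetric matrices with values in `Σ_n`. If `tr (x * y) = tr (χ x * ψ y)` for all invertible
symmetric `x` and all symmetric `y`, then `ψ` is `F`-linear. -/
theorem trace_condition_implies_linear_symm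
    {F : Type*} [Field F] {n : ℕ} (hn : 1 ≤ n)
    (hchar : ringChar F ≠ 2) (hcard : (n ^ 2 + 1 : Cardinal) ≤ Cardinal.mk F)
    (ψ : symmSubmodule F n → symmSubmodule F n)
    (χ : {x : symmSubmodule F n // IsUnit (x : Matrix (Fin n) (Fin n) F)} → symmSubmodule F n)
    (h : ∀ (x : {x : symmSubmodule F n // IsUnit (x : Matrix (Fin n) (Fin n) F)})
        (y : symmSubmodule F n),
      Matrix.trace ((x.1 : Matrix (Fin n) (Fin n) F) * (y : Matrix (Fin n) (Fin n) F))
        = Matrix.trace ((χ x : Matrix (Fin n) (Fin n) F) * (ψ y : Matrix (Fin n) (Fin n) F))) :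
    IsLinearMap F ψ := by
  classical
  let M := symmSubmodule F n
  -- the "graph" subspace
  let W : Submodule F (M × M) := Submodule.span F (Set.range fun y : M => (ψ y, y))
  have key : ∀ p ∈ W, ∀ x : {x : M // IsUnit (x : Matrix (Fin n) (Fin n) F)},
      Matrix.trace ((x.1 : Matrix (Fin n) (Fin n) F) * (p.2 : Matrix (Fin n) (Fin n) F))
        = Matrix.trace ((χ x : Matrix (Fin n) (Fin n) F)
            * (p.1 : Matrix (Fin n) (Fin n) F)) := by
    intro p hp
    induction hp using Submodule.span_induction with
    | mem p hp =>
      obtain ⟨y, rfl⟩ := hp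
      intro x
      simpa using h x y
    | zero => intro x; simp
    | add p q hp hq hip hiq =>
      intro x
      have := hip x
      have := hiq x
      simp only [Prod.fst_add, Prod.snd_add, Submodule.coe_add, mul_add, Matrix.trace_add]
      rw [hip x, hiq x]
    | smul c p hp hip =>
      intro x
      simp only [Prod.smul_fst, Prod.smul_snd, Submodule.coe_smul, Matrix.mul_smul,
        Matrix.trace_smul]
      rw [hip x]
  -- nondegeneracy on `M`
  have core : ∀ m : M, (∀ x : {x : M // IsUnit (x : Matrix (Fin n) (Fin n) F)},
      Matrix.trace ((x.1 : Matrix (Fin n) (Fin n) F) * (m : Matrix (Fin n) (Fin n) F)) = 0) →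
      m = 0 := by
    intro m hm
    have : (m : Matrix (Fin n) (Fin n) F) = 0 := by
      refine symm_trace_eq_zero hchar _ m.2 ?_
      intro x hx hu
      exact hm ⟨⟨x, hx⟩, hu⟩
    exact Subtype.ext this
  refine isLinearMap_of_graph ψ ?_
  intro p hp h1
  have h2 : p.2 = 0 := by
    refine core p.2 ?_
    intro x
    have := key p hp x
    rw [h1] at this
    simpa using this
  exact Prod.ext h1 h2
end

section
/- Let F be a field, n ≥ 2, a an n × n matrix over F, t ∈ F, and 1 ≤ i, j ≤ n with i ≠ j. Then A_{ji}(a + t·e_{ij}) = A_{ji}(a) − t·det(a^{{ij}}), where a^{{ij}} denotes the (n−2) × (n−2) submatrix of a obtained by deleting rows i, j and columns i, j. -/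
/-!
Deleting row `j` and column `i` of `a + t • e_{ij}` keeps row `i` and column `j`, so this minor
is the minor of `a` with `t` added to a single entry. Expanding its determinant along that row,
the extra term is `t` times the cofactor of that entry, whose minor is `a^{{ij}}`; the two signs
multiply to `-1` because removing `i` and `j` in either order shifts exactly one of them.
-/

open Matrix

/-- The submatrix of `x` obtained by deleting row `i` and column `j`. -/
def deleteRowCol {F : Type*} [Field F] {n : ℕ}
    (x : Matrix (Fin (n + 1)) (Fin (n + 1)) F) (i j : Fin (n + 1)) :
    Matrix (Fin n) (Fin n) F :=
  x.submatrix i.succAbove j.succAbove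

/-- The `(i, j)`-cofactor `A_{ij}(x) = (-1)^(i+j) * det (x (i | j))` of a square matrix `x`. -/
def cofactor {F : Type*} [Field F] {n : ℕ}
    (x : Matrix (Fin (n + 1)) (Fin (n + 1)) F) (i j : Fin (n + 1)) : F :=
  (-1 : F) ^ ((i : ℕ) + (j : ℕ)) * (deleteRowCol x i j).det

namespace Matrix

theorem submatrix_single_of_injective {l m n o α : Type*} [DecidableEq l] [DecidableEq m]
    [DecidableEq n] [DecidableEq o] [Zero α] {f : l → n} {g : m → o}
    (hf : f.Injective) (hg : g.Injective) (i : l) (j : m) (r : α) :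
    (single (f i) (g j) r).submatrix f g = single i j r := by
  ext i' j'
  simp [single_apply, hf.eq_iff, hg.eq_iff]

theorem det_add_single {R : Type*} [CommRing R] {n : ℕ}
    (B : Matrix (Fin (n + 1)) (Fin (n + 1)) R) (p q : Fin (n + 1)) (t : R) :
    det (B + single p q t) =
      det B + (-1) ^ (p + q : ℕ) * t * det (B.submatrix p.succAbove q.succAbove) := by
  have hminor (c : Fin (n + 1)) :
      (B + single p q t).submatrix p.succAbove c.succAbove =
        B.submatrix p.succAbove c.succAbove := by
    ext r s
    simp
  simp only [det_succ_row _ p, hminor, add_apply, single_apply, mul_add, add_mul,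
    Finset.sum_add_distrib]
  simp [mul_comm]

end Matrix

theorem cofactor_add_stdBasisMatrix_general
    {F : Type*} [Field F] {n : ℕ}
    (a : Matrix (Fin (n + 2)) (Fin (n + 2)) F) (t : F)
    (i j : Fin (n + 2))
    (j' : Fin (n + 1)) (hj' : i.succAbove j' = j) :
    cofactor (a + Matrix.single i j t) j i
      = cofactor a j i - t * (deleteRowCol (deleteRowCol a i i) j' j').det := by
  subst hj'
  set i' := j'.predAbove i
  have hi' : (i.succAbove j').succAbove i' = i := Fin.succAbove_succAbove_predAbove i j'
  have hminor : deleteRowCol (a + single i (i.succAbove j') t) (i.succAbove j') i =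
      deleteRowCol a (i.succAbove j') i + single i' j' t := by
    have hsingle := submatrix_single_of_injective (f := (i.succAbove j').succAbove)
      (g := i.succAbove) Fin.succAbove_right_injective Fin.succAbove_right_injective i' j' t
    rw [hi'] at hsingle
    rw [deleteRowCol, deleteRowCol, ← hsingle]
    rfl
  have hcomm : (deleteRowCol a (i.succAbove j') i).submatrix i'.succAbove j'.succAbove =
      deleteRowCol (deleteRowCol a i i) j' j' := by
    simp only [deleteRowCol, submatrix_submatrix]
    exact congrArg₂ _ (funext (Fin.succAbove_succAbove_succAbove_predAbove i j')) rfl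
  have hsign : (-1 : F) ^ ((i.succAbove j' : ℕ) + i) * (-1) ^ (i' + j' : ℕ) = -1 := by
    rw [← pow_add, add_add_add_comm, pow_add, Fin.neg_one_pow_succAbove_add_predAbove, neg_mul,
      ← pow_add, Even.neg_one_pow ⟨_, rfl⟩]
  rw [cofactor, cofactor, hminor, det_add_single, hcomm]
  linear_combination t * (deleteRowCol (deleteRowCol a i i) j' j').det * hsign

/-- **Lemma 3.** For an `n × n` matrix `a` (`n ≥ 2`), `t ∈ F` and `i ≠ j`, one has
`A_{ji}(a + t·e_{ij}) = A_{ji}(a) - t · det (a^{{ij}})`, where `a^{{ij}}` is obtained from `a`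
by deleting rows `i, j` and columns `i, j`.  Here the row/column `j` of the doubly-deleted
matrix is recorded by the index `j' : Fin (n + 1)` with `i.succAbove j' = j`, so that
`a^{{ij}} = deleteRowCol (deleteRowCol a i i) j' j'`. -/
theorem cofactor_add_stdBasisMatrix
    {F : Type*} [Field F] {n : ℕ}
    (a : Matrix (Fin (n + 2)) (Fin (n + 2)) F) (t : F)
    (i j : Fin (n + 2)) (hij : i ≠ j)
    (j' : Fin (n + 1)) (hj' : i.succAbove j' = j) :
    cofactor (a + Matrix.single i j t) j i
      = cofactor a j i - t * (deleteRowCol (deleteRowCol a i i) j' j').det :=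
  cofactor_add_stdBasisMatrix_general a t i j j' hj'
end

section
/- Let n be an even positive integer and let F be a field with char(F) ≠ 2 and |F| ≥ n² + 1. If a, b ∈ Q_n satisfy det(a + x) = det(b + x) for all x ∈ Q_n, then a = b. -/
open Matrix

/-- The `F`-submodule of skew-symmetric `n × n` matrices over `F` (the space `Q_n`). -/
def skewSubmodule (F : Type*) [Field F] (n : ℕ) :
    Submodule F (Matrix (Fin n) (Fin n) F) where
  carrier := {a | aᵀ = -a}
  add_mem' := by
    intro a b ha hb
    simp only [Set.mem_setOf_eq] at *
    rw [Matrix.transpose_add, ha, hb, neg_add]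
  zero_mem' := by simp
  smul_mem' := by
    intro c a ha
    simp only [Set.mem_setOf_eq] at *
    rw [Matrix.transpose_smul, ha, smul_neg]

/-!
Put `c = b - a`, so that `det (c + x) = det x` for every skew-symmetric `x`. If `w` is skew and
invertible then so is `w⁻¹`, and `det (t • 1 + w * c) = det w * det (c + t • w⁻¹) = t ^ n` for
every `t : F`. Since `|F| > n`, the characteristic polynomial of `-(w * c)` is `X ^ n`, whence
`tr (w * c) = 0`. As `n` is even there is an invertible skew `J`, and `z + t • J` is invertible for
all but at most `n` values of `t`; by linearity of the trace, `tr (z * c) = 0` for every skew `z`.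
Testing against `E i j - E j i` then gives `c = 0`, because `2 ≠ 0` in `F`.
-/

open Polynomial

namespace Matrix

section CommRing

variable {ι R : Type*} [Fintype ι] [DecidableEq ι] [CommRing R]

theorem exists_transpose_eq_neg_isUnit_det (hι : Even (Fintype.card ι)) :
    ∃ J : Matrix ι ι R, Jᵀ = -J ∧ IsUnit J.det := by
  obtain ⟨m, hm⟩ := hι
  let e : ι ≃ Fin m ⊕ Fin m := Fintype.equivOfCardEq (by simp [hm])
  let J : Matrix (Fin m ⊕ Fin m) (Fin m ⊕ Fin m) R := fromBlocks 0 1 (-1) 0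
  have hJt : Jᵀ = -J := by simp [J, fromBlocks_transpose, fromBlocks_neg]
  have hJ : J * fromBlocks 0 (-1) 1 0 = 1 := by
    simp [J, fromBlocks_multiply, ← fromBlocks_one]
  refine ⟨reindex e.symm e.symm J, ?_, ?_⟩
  · rw [transpose_reindex, hJt]
    rfl
  · rw [det_reindex_self]
    exact isUnit_det_of_right_inverse hJ

theorem eq_zero_of_forall_trace_mul_eq_zero [NoZeroDivisors R] (h2 : (2 : R) ≠ 0)
    {c : Matrix ι ι R} (hc : cᵀ = -c) (h : ∀ z : Matrix ι ι R, zᵀ = -z → (z * c).trace = 0) :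
    c = 0 := by
  ext i j
  have hji : c j i = -c i j := by simpa using congrFun (congrFun hc i) j
  have h2c : 2 * c i j = 0 := by
    rcases eq_or_ne i j with rfl | hij
    · linear_combination hji
    · have hz : (single i j (1 : R) - single j i 1)ᵀ = -(single i j 1 - single j i 1) := by
        rw [transpose_sub, transpose_single, transpose_single, neg_sub]
      have htr := h _ hz
      rw [sub_mul, trace_sub, trace_single_mul, trace_single_mul, one_smul, one_smul] at htr
      linear_combination hji - htr
  exact (mul_eq_zero.mp h2c).resolve_left h2

end CommRing

section Field

variable {ι F : Type*} [Fintype ι] [DecidableEq ι] [Field F]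

theorem eval_charpoly_neg (m : Matrix ι ι F) (t : F) :
    (-m).charpoly.eval t = (t • 1 + m).det := by
  rw [eval_charpoly, sub_neg_eq_add, scalar_apply, smul_one_eq_diagonal]

theorem trace_eq_zero_of_det_smul_one_add_eq_pow (hF : Fintype.card ι < Cardinal.mk F)
    {m : Matrix ι ι F} (h : ∀ t : F, (t • 1 + m).det = t ^ Fintype.card ι) : m.trace = 0 := by
  have hchar : (-m).charpoly = X ^ Fintype.card ι := by
    rw [← sub_eq_zero]
    refine eq_zero_of_forall_eval_zero_of_natDegree_lt_card _ (fun t => ?_) ?_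
    · simp [eval_charpoly_neg, h]
    · refine lt_of_le_of_lt (Nat.cast_le.2 ?_) hF
      exact (natDegree_sub_le _ _).trans (by simp [charpoly_natDegree_eq_dim])
  rw [← neg_eq_zero, ← trace_neg, trace_eq_neg_charpoly_nextCoeff, hchar, monic_X.nextCoeff_pow,
    ← add_zero (X : F[X]), ← C_0, nextCoeff_X_add_C, smul_zero, neg_zero]

theorem exists_isUnit_det_add_smul (hF : Fintype.card ι < Cardinal.mk F)
    {J : Matrix ι ι F} (hJ : IsUnit J.det) (z : Matrix ι ι F) :
    ∃ t : F, IsUnit (z + t • J).det := by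
  obtain ⟨t, ht⟩ := exists_eval_ne_zero_of_natDegree_lt_card (-(J⁻¹ * z)).charpoly
    (charpoly_monic _).ne_zero (by rwa [charpoly_natDegree_eq_dim])
  refine ⟨t, ?_⟩
  have hfactor : z + t • J = J * (t • 1 + J⁻¹ * z) := by
    rw [mul_add, mul_smul_comm, mul_one, ← mul_assoc, mul_nonsing_inv _ hJ, one_mul, add_comm]
  rw [hfactor, det_mul, ← eval_charpoly_neg]
  exact hJ.mul (isUnit_iff_ne_zero.2 ht)

theorem transpose_nonsing_inv_eq_neg {w : Matrix ι ι F} (hw : wᵀ = -w) (hu : IsUnit w.det) :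
    w⁻¹ᵀ = -w⁻¹ := by
  rw [transpose_nonsing_inv, hw]
  exact inv_eq_left_inv (by rw [neg_mul_neg, nonsing_inv_mul _ hu])

theorem trace_mul_eq_zero_of_isUnit_det (hF : Fintype.card ι < Cardinal.mk F)
    {c : Matrix ι ι F} (hc : ∀ x : Matrix ι ι F, xᵀ = -x → (c + x).det = x.det)
    {w : Matrix ι ι F} (hw : wᵀ = -w) (hu : IsUnit w.det) : (w * c).trace = 0 := by
  refine trace_eq_zero_of_det_smul_one_add_eq_pow hF fun t => ?_
  have hskew : (t • w⁻¹)ᵀ = -(t • w⁻¹) := by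
    rw [transpose_smul, transpose_nonsing_inv_eq_neg hw hu, smul_neg]
  calc (t • 1 + w * c).det = (w * (c + t • w⁻¹)).det := by
        rw [mul_add, mul_smul_comm, mul_nonsing_inv _ hu, add_comm]
    _ = w.det * (t ^ Fintype.card ι * w⁻¹.det) := by rw [det_mul, hc _ hskew, det_smul]
    _ = t ^ Fintype.card ι := by
        rw [mul_left_comm, ← det_mul, mul_nonsing_inv _ hu, det_one, mul_one]

theorem trace_mul_eq_zero_of_transpose_eq_neg (hF : Fintype.card ι < Cardinal.mk F)
    (hι : Even (Fintype.card ι)) {c : Matrix ι ι F}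
    (hc : ∀ x : Matrix ι ι F, xᵀ = -x → (c + x).det = x.det)
    {z : Matrix ι ι F} (hz : zᵀ = -z) : (z * c).trace = 0 := by
  obtain ⟨J, hJ, hJu⟩ := exists_transpose_eq_neg_isUnit_det (R := F) hι
  obtain ⟨t, ht⟩ := exists_isUnit_det_add_smul hF hJu z
  have hzJ : (z + t • J)ᵀ = -(z + t • J) := by
    rw [transpose_add, transpose_smul, hz, hJ, smul_neg, neg_add]
  calc (z * c).trace = ((z + t • J) * c).trace - t * (J * c).trace := by
        rw [add_mul, trace_add, smul_mul_assoc, trace_smul, smul_eq_mul, add_sub_cancel_right]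
    _ = 0 := by
        rw [trace_mul_eq_zero_of_isUnit_det hF hc hzJ ht,
          trace_mul_eq_zero_of_isUnit_det hF hc hJ hJu, mul_zero, sub_zero]

end Field

end Matrix

theorem skew_det_add_cancel_general
    {F : Type*} [Field F] {n : ℕ} (hneven : Even n)
    (hchar : ringChar F ≠ 2) (hcard : (n ^ 2 + 1 : Cardinal) ≤ Cardinal.mk F)
    (a b : skewSubmodule F n)
    (h : ∀ x : skewSubmodule F n,
      ((a : Matrix (Fin n) (Fin n) F) + (x : Matrix (Fin n) (Fin n) F)).det
        = ((b : Matrix (Fin n) (Fin n) F) + (x : Matrix (Fin n) (Fin n) F)).det) :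
    a = b := by
  obtain ⟨a, ha⟩ := a
  obtain ⟨b, hb⟩ := b
  have hF : (Fintype.card (Fin n) : Cardinal) < Cardinal.mk F := by
    rw [Fintype.card_fin]
    refine lt_of_lt_of_le ?_ hcard
    exact_mod_cast Nat.lt_succ_of_le (Nat.le_self_pow two_ne_zero n)
  have hdet : ∀ x : Matrix (Fin n) (Fin n) F, xᵀ = -x → (b - a + x).det = x.det := by
    intro x hx
    have := h ⟨x - a, sub_mem (show x ∈ skewSubmodule F n from hx) ha⟩
    rwa [add_sub_cancel, ← add_sub_assoc, add_sub_right_comm, eq_comm] at this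
  have hba : b - a = 0 :=
    eq_zero_of_forall_trace_mul_eq_zero (Ring.two_ne_zero hchar) (sub_mem hb ha) fun _ hz =>
      trace_mul_eq_zero_of_transpose_eq_neg hF (by rwa [Fintype.card_fin]) hdet hz
  exact Subtype.ext (sub_eq_zero.mp hba).symm

/-- **Lemma 4.** Let `n` be even and positive. If skew-symmetric matrices `a, b` satisfy
`det (a + x) = det (b + x)` for all skew-symmetric `x`, then `a = b`. -/
theorem skew_det_add_cancel
    {F : Type*} [Field F] {n : ℕ} (hn : 0 < n) (hneven : Even n)
    (hchar : ringChar F ≠ 2) (hcard : (n ^ 2 + 1 : Cardinal) ≤ Cardinal.mk F)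
    (a b : skewSubmodule F n)
    (h : ∀ x : skewSubmodule F n,
      ((a : Matrix (Fin n) (Fin n) F) + (x : Matrix (Fin n) (Fin n) F)).det
        = ((b : Matrix (Fin n) (Fin n) F) + (x : Matrix (Fin n) (Fin n) F)).det) :
    a = b :=
  skew_det_add_cancel_general hneven hchar hcard a b h
end

section
/- Let n be an even positive integer and let F be a field with char(F) ≠ 2 and |F| ≥ n² + 1. Let ψ : Q_n → Q_n be a map and let χ be a map from the set of all invertible matrices in Q_n into Q_n. If tr(x·y) = tr(χ(x)·ψ(y)) for every invertible x ∈ Q_n and every y ∈ Q_n, then ψ is F-linear. -/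
open Matrix

namespace SkewAux

variable {F : Type*} [Field F] {n : ℕ}

lemma mem_skew_iff (a : Matrix (Fin n) (Fin n) F) :
    a ∈ skewSubmodule F n ↔ aᵀ = -a := Iff.rfl

lemma trace_mul_stdBasisMatrix (M : Matrix (Fin n) (Fin n) F) (i j : Fin n) :
    Matrix.trace (M * Matrix.single i j (1:F)) = M j i := by
  simp [Matrix.trace, Matrix.diag, Matrix.mul_apply, Matrix.single, ite_and]

/-- Nondegeneracy of the trace form on skew matrices. -/
lemma skew_eq_zero_of_trace (hchar : ringChar F ≠ 2) (w : skewSubmodule F n)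
    (hw : ∀ y : skewSubmodule F n,
      Matrix.trace ((w : Matrix (Fin n) (Fin n) F) * (y : Matrix (Fin n) (Fin n) F)) = 0) :
    w = 0 := by
  have h2 : (2 : F) ≠ 0 := Ring.two_ne_zero hchar
  have hwskew : (w : Matrix (Fin n) (Fin n) F)ᵀ = -(w : Matrix (Fin n) (Fin n) F) := w.2
  ext i j
  by_cases hij : i = j
  · subst hij
    have hii := congrFun (congrFun hwskew i) i
    simp only [Matrix.transpose_apply, Matrix.neg_apply] at hii
    have h2w : (2 : F) * (w : Matrix (Fin n) (Fin n) F) i i = 0 := by linear_combination hii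
    simpa [Submodule.coe_zero] using (mul_eq_zero.mp h2w).resolve_left h2
  · set E : Matrix (Fin n) (Fin n) F :=
      Matrix.single i j (1:F) - Matrix.single j i (1:F) with hE
    have hEmem : E ∈ skewSubmodule F n := by
      rw [mem_skew_iff]
      ext a b
      simp [hE, Matrix.single, and_comm]
    have htr := hw ⟨E, hEmem⟩
    simp only [hE, Submodule.coe_mk] at htr
    rw [Matrix.mul_sub, Matrix.trace_sub, trace_mul_stdBasisMatrix, trace_mul_stdBasisMatrix]
      at htr
    have hji := congrFun (congrFun hwskew j) i
    simp only [Matrix.transpose_apply, Matrix.neg_apply] at hji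
    have h2w : (2 : F) * (w : Matrix (Fin n) (Fin n) F) i j = 0 := by
      linear_combination hji - htr
    simpa [Submodule.coe_zero] using (mul_eq_zero.mp h2w).resolve_left h2

open Kronecker in
/-- For `n` even there exists an invertible skew-symmetric matrix. -/
lemma exists_skew_unit (hneven : Even n) :
    ∃ J : Matrix (Fin n) (Fin n) F, Jᵀ = -J ∧ IsUnit J := by
  obtain ⟨m, hm⟩ := hneven
  have hm2 : n = 2 * m := by omega
  subst hm2
  set K : Matrix (Fin 2) (Fin 2) F := !![0, 1; -1, 0] with hKdef
  have hKT : Kᵀ = -K := by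
    ext i j; fin_cases i <;> fin_cases j <;> simp [hKdef]
  have hKK : K * K = -1 := by
    ext i j
    fin_cases i <;> fin_cases j <;>
      simp [hKdef, Matrix.mul_apply, Fin.sum_univ_two, Matrix.one_apply]
  set J₀ : Matrix (Fin 2 × Fin m) (Fin 2 × Fin m) F := K ⊗ₖ 1 with hJ₀def
  have hJ₀T : J₀ᵀ = -J₀ := by
    rw [hJ₀def, ← Matrix.kroneckerMap_transpose, Matrix.transpose_one, hKT]
    have : (-K) = (-1 : F) • K := by simp
    rw [this, Matrix.smul_kronecker]
    simp
  have hJ₀J₀ : J₀ * J₀ = -1 := by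
    rw [hJ₀def, ← Matrix.mul_kronecker_mul, hKK, one_mul]
    have : ((-1 : Matrix (Fin 2) (Fin 2) F)) = (-1 : F) • 1 := by simp
    rw [this, Matrix.smul_kronecker, Matrix.one_kronecker_one]
    simp
  let e : Fin 2 × Fin m ≃ Fin (2 * m) := finProdFinEquiv
  set J : Matrix (Fin (2 * m)) (Fin (2 * m)) F := (Matrix.reindexAlgEquiv F F e) J₀ with hJdef
  have hJT : Jᵀ = -J := by
    show ((Matrix.reindex e e) J₀)ᵀ = -((Matrix.reindex e e) J₀)
    rw [Matrix.transpose_reindex, hJ₀T]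
    rfl
  have hJJ : J * J = -1 := by
    rw [hJdef, ← _root_.map_mul (Matrix.reindexAlgEquiv F F e) J₀ J₀, hJ₀J₀, map_neg,
      _root_.map_one (Matrix.reindexAlgEquiv F F e)]
  refine ⟨J, hJT, ?_⟩
  refine ⟨⟨J, -J, ?_, ?_⟩, rfl⟩
  · rw [mul_neg, hJJ, neg_neg]
  · rw [neg_mul, hJJ, neg_neg]

/-- Invertible skew matrices span the skew space. -/
lemma span_units_eq_top (hn : 0 < n) (hneven : Even n)
    (hcard : (n ^ 2 + 1 : Cardinal) ≤ Cardinal.mk F) :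
    Submodule.span F {x : skewSubmodule F n | IsUnit (x : Matrix (Fin n) (Fin n) F)} = ⊤ := by
  obtain ⟨J, hJT, hJu⟩ := exists_skew_unit (F := F) hneven
  have hJdet : IsUnit J.det := (Matrix.isUnit_iff_isUnit_det J).mp hJu
  rw [eq_top_iff]
  rintro a -
  set b : Matrix (Fin n) (Fin n) F := J⁻¹ * (a : Matrix (Fin n) (Fin n) F) with hb
  set q : Polynomial F := Matrix.charpoly (-b) with hq
  have hqmonic : q.Monic := Matrix.charpoly_monic _
  have hqdeg : q.natDegree = n := by
    rw [hq, Matrix.charpoly_natDegree_eq_dim]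
    simp
  have hqne : q ≠ 0 := hqmonic.ne_zero
  have hcardlt : (q.natDegree : Cardinal) < Cardinal.mk F := by
    refine lt_of_lt_of_le ?_ hcard
    rw [hqdeg]
    have hnat : ((n ^ 2 + 1 : ℕ) : Cardinal) = (n : Cardinal) ^ 2 + 1 := by push_cast; ring
    rw [← hnat, Nat.cast_lt]
    nlinarith
  obtain ⟨t, ht⟩ := q.exists_eval_ne_zero_of_natDegree_lt_card hqne hcardlt
  have heval : q.eval t = ((t • 1 + b : Matrix (Fin n) (Fin n) F)).det := by
    have h1 : q.eval t = ((Matrix.charmatrix (-b)).map (Polynomial.evalRingHom t)).det := by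
      rw [hq, Matrix.charpoly]
      exact (RingHom.map_det (Polynomial.evalRingHom t) _).trans
        (by rw [RingHom.mapMatrix_apply])
    rw [h1]
    congr 1
    ext i j
    by_cases hij : i = j
    · subst hij
      simp [Matrix.map_apply, Matrix.charmatrix_apply_eq, Matrix.one_apply]
    · simp [Matrix.map_apply, Matrix.charmatrix_apply_ne _ _ _ hij, Matrix.one_apply, hij]
  have hkey : (a : Matrix (Fin n) (Fin n) F) + t • J = J * (t • 1 + b) := by
    rw [Matrix.mul_add, hb, ← Matrix.mul_assoc, Matrix.mul_nonsing_inv _ hJdet, one_mul,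
      Matrix.mul_smul, Matrix.mul_one, add_comm]
  have hdet : IsUnit ((a : Matrix (Fin n) (Fin n) F) + t • J).det := by
    rw [hkey, Matrix.det_mul, isUnit_iff_ne_zero]
    exact mul_ne_zero hJdet.ne_zero (by rw [← heval]; exact ht)
  have hunit : IsUnit ((a : Matrix (Fin n) (Fin n) F) + t • J) :=
    (Matrix.isUnit_iff_isUnit_det _).mpr hdet
  have hJmem : J ∈ skewSubmodule F n := hJT
  have hxmem : (a : Matrix (Fin n) (Fin n) F) + t • J ∈ skewSubmodule F n :=
    (skewSubmodule F n).add_mem a.2 ((skewSubmodule F n).smul_mem t hJmem)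
  have ha : a = (⟨(a : Matrix (Fin n) (Fin n) F) + t • J, hxmem⟩ : skewSubmodule F n)
      - t • (⟨J, hJmem⟩ : skewSubmodule F n) := by
    apply Subtype.ext
    simp
  rw [ha]
  exact Submodule.sub_mem _ (Submodule.subset_span hunit)
    (Submodule.smul_mem _ _ (Submodule.subset_span hJu))

end SkewAux


namespace SkewAux

section Defs

variable (F : Type*) [Field F] (n : ℕ)

/-- The trace pairing as a linear map into the dual. -/
noncomputable def traceDual : skewSubmodule F n →ₗ[F] Module.Dual F (skewSubmodule F n) where
  toFun w :=
    { toFun := fun y =>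
        Matrix.trace ((w : Matrix (Fin n) (Fin n) F) * (y : Matrix (Fin n) (Fin n) F))
      map_add' := by intros; simp [Matrix.mul_add]
      map_smul' := by intros; simp [Matrix.mul_smul] }
  map_add' := by intros; ext y; simp [Matrix.add_mul]
  map_smul' := by intros; ext y; simp [Matrix.smul_mul]

@[simp] lemma traceDual_apply (w y : skewSubmodule F n) :
    traceDual F n w y
      = Matrix.trace ((w : Matrix (Fin n) (Fin n) F) * (y : Matrix (Fin n) (Fin n) F)) := rfl

/-- Coercion of the dual into the function space. -/
def coeDual : Module.Dual F (skewSubmodule F n) →ₗ[F] (skewSubmodule F n → F) where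
  toFun L := ⇑L
  map_add' := by intros; rfl
  map_smul' := by intros; rfl

@[simp] lemma coeDual_apply (L : Module.Dual F (skewSubmodule F n)) (y : skewSubmodule F n) :
    coeDual F n L y = L y := rfl

variable {F n} in
/-- Precomposition with `ψ` as a linear map from the dual into the function space. -/
def pullback (ψ : skewSubmodule F n → skewSubmodule F n) :
    Module.Dual F (skewSubmodule F n) →ₗ[F] (skewSubmodule F n → F) where
  toFun M := fun y => M (ψ y)
  map_add' := by intros; rfl
  map_smul' := by intros; rfl

@[simp] lemma pullback_apply (ψ : skewSubmodule F n → skewSubmodule F n)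
    (M : Module.Dual F (skewSubmodule F n)) (y : skewSubmodule F n) :
    pullback ψ M y = M (ψ y) := rfl

end Defs

end SkewAux

open SkewAux in
/-- **Lemma 5.** Let `n` be even and positive, `ψ : Q_n → Q_n`, and let `χ` be a map defined on
the set of invertible skew-symmetric matrices with values in `Q_n`. If
`tr (x * y) = tr (χ x * ψ y)` for all invertible skew-symmetric `x` and all skew-symmetric `y`,
then `ψ` is `F`-linear. -/
theorem trace_condition_implies_linear_skew
    {F : Type*} [Field F] {n : ℕ} (hn : 0 < n) (hneven : Even n)
    (hchar : ringChar F ≠ 2) (hcard : (n ^ 2 + 1 : Cardinal) ≤ Cardinal.mk F)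
    (ψ : skewSubmodule F n → skewSubmodule F n)
    (χ : {x : skewSubmodule F n // IsUnit (x : Matrix (Fin n) (Fin n) F)} → skewSubmodule F n)
    (h : ∀ (x : {x : skewSubmodule F n // IsUnit (x : Matrix (Fin n) (Fin n) F)})
        (y : skewSubmodule F n),
      Matrix.trace ((x.1 : Matrix (Fin n) (Fin n) F) * (y : Matrix (Fin n) (Fin n) F))
        = Matrix.trace ((χ x : Matrix (Fin n) (Fin n) F) * (ψ y : Matrix (Fin n) (Fin n) F))) :
    IsLinearMap F ψ := by
  classical
  have hAinj : Function.Injective (traceDual F n) := by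
    rw [← LinearMap.ker_eq_bot, LinearMap.ker_eq_bot']
    intro w hw
    apply SkewAux.skew_eq_zero_of_trace hchar w
    intro y
    have := LinearMap.congr_fun hw y
    rwa [traceDual_apply] at this
  have hAsurj : Function.Surjective (traceDual F n) :=
    (LinearMap.injective_iff_surjective_of_finrank_eq_finrank
      Subspace.dual_finrank_eq.symm).mp hAinj
  have hιinj : Function.Injective (coeDual F n) := fun L L' hh =>
    LinearMap.ext fun y => congrFun hh y
  set S : Set (skewSubmodule F n) :=
    {x : skewSubmodule F n | IsUnit (x : Matrix (Fin n) (Fin n) F)} with hS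
  have hspan : Submodule.span F S = ⊤ := SkewAux.span_units_eq_top hn hneven hcard
  have hspan' : Submodule.span F (traceDual F n '' S) = ⊤ := by
    rw [← Submodule.map_span, hspan, Submodule.map_top, LinearMap.range_eq_top.mpr hAsurj]
  have hsub : coeDual F n '' (traceDual F n '' S) ⊆ ↑(LinearMap.range (pullback ψ)) := by
    rintro - ⟨-, ⟨x, hx, rfl⟩, rfl⟩
    refine ⟨traceDual F n (χ ⟨x, hx⟩), ?_⟩
    funext y
    rw [pullback_apply, coeDual_apply, traceDual_apply, traceDual_apply]
    exact (h ⟨x, hx⟩ y).symm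
  have hle : LinearMap.range (coeDual F n) ≤ LinearMap.range (pullback ψ) := by
    rw [LinearMap.range_eq_map, ← hspan', Submodule.map_span, Submodule.span_le]
    exact hsub
  have hfin1 : Module.finrank F (LinearMap.range (pullback ψ))
      ≤ Module.finrank F (Module.Dual F (skewSubmodule F n)) :=
    LinearMap.finrank_range_le _
  have hfin2 : Module.finrank F (LinearMap.range (coeDual F n))
      = Module.finrank F (Module.Dual F (skewSubmodule F n)) :=
    LinearMap.finrank_range_of_inj hιinj
  have heq : LinearMap.range (coeDual F n) = LinearMap.range (pullback ψ) :=
    Submodule.eq_of_le_of_finrank_le hle (by rw [hfin2]; exact hfin1)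
  have key : ∀ M : Module.Dual F (skewSubmodule F n),
      ∃ L : Module.Dual F (skewSubmodule F n), ∀ y, M (ψ y) = L y := by
    intro M
    have hmem : pullback ψ M ∈ LinearMap.range (coeDual F n) := by
      rw [heq]; exact ⟨M, rfl⟩
    obtain ⟨L, hL⟩ := hmem
    refine ⟨L, fun y => ?_⟩
    have := congrFun hL y
    rw [coeDual_apply, pullback_apply] at this
    exact this.symm
  constructor
  · intro a b
    rw [← sub_eq_zero, ← Module.forall_dual_apply_eq_zero_iff F]
    intro M
    obtain ⟨L, hL⟩ := key M
    rw [map_sub, map_add, hL, hL, hL, map_add]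
    ring
  · intro c a
    rw [← sub_eq_zero, ← Module.forall_dual_apply_eq_zero_iff F]
    intro M
    obtain ⟨L, hL⟩ := key M
    rw [map_sub, _root_.map_smul, hL, hL, _root_.map_smul]
    simp
end

section
/- Let n be an even positive integer and let F be a field with char(F) ≠ 2 and |F| ≥ n² + 1. Then the F-vector space Q_n of n × n skew-symmetric matrices over F has a basis consisting entirely of invertible matrices. -/
open Matrix

/-!
Since `n` is even, the standard symplectic matrix `J` is an invertible skew-symmetric matrix.
For any skew-symmetric `A`, `A + r • J = J * (r - (-J⁻¹ A))`, whose determinant is `det J` times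
the characteristic polynomial of `-J⁻¹ A` at `r`; this polynomial has degree `n < |F|`, so some
`A + r • J` is invertible and `A = (A + r • J) - r • J` lies in the span of the invertible
skew-symmetric matrices. A basis can be extracted from this spanning set, and it has
`n (n - 1) / 2` elements because, as `2 ≠ 0` in `F`, a skew-symmetric matrix is determined by
its entries above the diagonal.
-/

open Module Submodule Cardinal

theorem Matrix.exists_isUnit_transpose_eq_neg {R m : Type*} [CommRing R] [Fintype m]
    [DecidableEq m] (hm : Even (Fintype.card m)) : ∃ J : Matrix m m R, Jᵀ = -J ∧ IsUnit J := by
  obtain ⟨k, hk⟩ := hm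
  let e : m ≃ Fin k ⊕ Fin k := (Fintype.equivFinOfCardEq hk).trans finSumFinEquiv.symm
  refine ⟨(J (Fin k) R).submatrix e e, ?_, ?_⟩
  · rw [transpose_submatrix, J_transpose]; rfl
  · rw [isUnit_iff_isUnit_det, det_submatrix_equiv_self]
    exact isUnit_det_J _ _

theorem Matrix.exists_isUnit_add_smul {K m : Type*} [Field K] [Fintype m] [DecidableEq m]
    (hcard : (Fintype.card m : Cardinal) < #K) (A : Matrix m m K) {J : Matrix m m K}
    (hJ : IsUnit J) : ∃ r : K, IsUnit (A + r • J) := by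
  have hdet : IsUnit J.det := (isUnit_iff_isUnit_det J).mp hJ
  set N := J⁻¹ * A
  obtain ⟨r, hr⟩ := Polynomial.exists_eval_ne_zero_of_natDegree_lt_card (-N).charpoly
    (charpoly_monic _).ne_zero (by rwa [charpoly_natDegree_eq_dim])
  refine ⟨r, ?_⟩
  have hfac : A + r • J = J * (scalar m r - -N) := by
    rw [sub_neg_eq_add, mul_add, mul_nonsing_inv_cancel_left _ _ hdet, scalar_apply,
      ← smul_one_eq_diagonal, Matrix.mul_smul, mul_one, add_comm]
  rw [hfac, isUnit_iff_isUnit_det, det_mul, ← eval_charpoly]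
  exact hdet.mul hr.isUnit

theorem Submodule.span_eq_top_of_forall_exists_add_smul_mem {R M : Type*} [Ring R]
    [AddCommGroup M] [Module R M] {s : Set M} {j : M} (hj : j ∈ s)
    (h : ∀ v, ∃ r : R, v + r • j ∈ s) : span R s = ⊤ := by
  refine eq_top_iff.mpr fun v _ => ?_
  obtain ⟨r, hr⟩ := h v
  simpa using sub_mem (subset_span hr) (smul_mem _ r (subset_span hj))

theorem Module.Basis.exists_fin_forall_mem_of_span_eq_top {K V : Type*} [DivisionRing K]
    [AddCommGroup V] [Module K V] [FiniteDimensional K V] {s : Set V} (hs : span K s = ⊤) :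
    ∃ b : Basis (Fin (finrank K V)) K V, ∀ i, b i ∈ s := by
  let b := Basis.ofSpan hs.ge
  refine ⟨b.reindex (b.indexEquiv (finBasis K V)), fun i => ?_⟩
  rw [Basis.reindex_apply]
  exact Basis.ofSpan_subset hs.ge (Set.mem_range_self _)

theorem Matrix.diag_eq_zero_of_transpose_eq_neg {R m : Type*} [Ring R] [NoZeroDivisors R]
    (h2 : (2 : R) ≠ 0) {a : Matrix m m R} (ha : aᵀ = -a) (i : m) : a i i = 0 := by
  have h : a i i + a i i = 0 := eq_neg_iff_add_eq_zero.mp (congr_fun₂ ha i i)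
  rw [← two_mul] at h
  exact (mul_eq_zero.mp h).resolve_left h2

theorem Fintype.card_fin_lt_pairs (n : ℕ) :
    Fintype.card {p : Fin n × Fin n // p.1 < p.2} = n * (n - 1) / 2 := by
  rw [Fintype.card_subtype, ← Finset.univ_product_univ, Finset.card_product_filter_lt,
    Finset.card_univ, Fintype.card_fin, Nat.choose_two_right]

section Skew

variable {F : Type*} [Field F] {n : ℕ}

noncomputable def skewSubmoduleEquivStrictUpper (h2 : (2 : F) ≠ 0) :
    skewSubmodule F n ≃ₗ[F] ({p : Fin n × Fin n // p.1 < p.2} → F) where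
  toFun a p := (a : Matrix (Fin n) (Fin n) F) p.1.1 p.1.2
  map_add' _ _ := rfl
  map_smul' _ _ := rfl
  invFun f := ⟨of fun i j =>
      if h : i < j then f ⟨(i, j), h⟩ else if h' : j < i then -f ⟨(j, i), h'⟩ else 0, by
    ext i j
    rcases lt_trichotomy i j with h | rfl | h
    · simp [h, h.not_gt]
    · simp
    · simp [h, h.not_gt]⟩
  left_inv a := by
    ext i j
    rcases lt_trichotomy i j with h | rfl | h
    · simp [h]
    · simp [diag_eq_zero_of_transpose_eq_neg h2 a.2]
    · have hji : (a : Matrix (Fin n) (Fin n) F) j i = -(a : Matrix (Fin n) (Fin n) F) i j :=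
        congr_fun₂ a.2 i j
      simp [h, h.not_gt, hji]
  right_inv f := by
    ext p
    simp [p.2]

theorem finrank_skewSubmodule (h2 : (2 : F) ≠ 0) :
    finrank F (skewSubmodule F n) = n * (n - 1) / 2 := by
  rw [(skewSubmoduleEquivStrictUpper h2).finrank_eq, finrank_fintype_fun_eq_card,
    Fintype.card_fin_lt_pairs]

end Skew

theorem exists_basis_of_invertible_skew_general
    {F : Type*} [Field F] {n : ℕ} (hneven : Even n)
    (hchar : ringChar F ≠ 2) (hcard : (n ^ 2 + 1 : Cardinal) ≤ Cardinal.mk F) :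
    ∃ b : Module.Basis (Fin (n * (n - 1) / 2)) F (skewSubmodule F n),
      ∀ k, IsUnit ((b k : Matrix (Fin n) (Fin n) F)) := by
  obtain ⟨J, hJskew, hJ⟩ :=
    exists_isUnit_transpose_eq_neg (R := F) (m := Fin n) (by rwa [Fintype.card_fin])
  have hcard_lt : (Fintype.card (Fin n) : Cardinal) < #F := by
    refine lt_of_lt_of_le ?_ hcard
    rw [Fintype.card_fin]
    exact_mod_cast Nat.lt_succ_of_le (Nat.le_self_pow two_ne_zero n)
  have hspan : span F {a : skewSubmodule F n | IsUnit (a : Matrix (Fin n) (Fin n) F)} = ⊤ :=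
    span_eq_top_of_forall_exists_add_smul_mem (j := ⟨J, hJskew⟩) hJ
      fun a => exists_isUnit_add_smul hcard_lt a hJ
  obtain ⟨b, hb⟩ := Basis.exists_fin_forall_mem_of_span_eq_top hspan
  exact ⟨b.reindex (finCongr (finrank_skewSubmodule (Ring.two_ne_zero hchar))),
    fun k => by rw [Basis.reindex_apply]; exact hb _⟩

/-- For even positive `n`, the space `Q_n` of skew-symmetric matrices
(of dimension `n (n - 1) / 2`) has a basis consisting entirely of invertible matrices. -/
theorem exists_basis_of_invertible_skew
    {F : Type*} [Field F] {n : ℕ} (hn : 0 < n) (hneven : Even n)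
    (hchar : ringChar F ≠ 2) (hcard : (n ^ 2 + 1 : Cardinal) ≤ Cardinal.mk F) :
    ∃ b : Module.Basis (Fin (n * (n - 1) / 2)) F (skewSubmodule F n),
      ∀ k, IsUnit ((b k : Matrix (Fin n) (Fin n) F)) :=
  exists_basis_of_invertible_skew_general hneven hchar hcard
end
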